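/- Fix a real δ > 0 and let P_δ be the (finite) set of primes p > 3 with p·(2/(p−1))^{1+δ} > 1, and set C_δ = 24·∏_{p ∈ P_δ} p·(2/(p−1))^{1+δ}. Then for every positive integer N, N ≤ C_δ · k(N)^{1+δ}. -/

import Mathlib

/-!
The squares of `G = (ℤ/Nℤ)ˣ` contain the cyclic group generated by `g²` for `g` of maximal
order, so `2 k(N) ≥ exp G = λ(N)`, the Carmichael function. As `λ(pᵉ) = φ(pᵉ)` for odd `p` and
`2 λ(2ᵉ) ≥ φ(2ᵉ)`, this gives `pᵉ ≤ p (2/(p-1))^(1+δ) k(pᵉ)^(1+δ)` for odd `p` (apply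
`x ≤ x^(1+δ)` to `x = p^(e-1) ≥ 1`) and `2ᵉ ≤ 8 k(2ᵉ)^(1+δ)`. Both `N` and `k(N)` are
multiplicative by the Chinese remainder theorem, so `N ≤ (∏_{p ∣ N} c_p) k(N)^(1+δ)` with
`c_p = sqImageConst δ p`; finally `c_3 = 3`, and `c_p = 1` for primes `p > 3` outside `P_δ`.
-/

/-- `k(N)`: the cardinality of the image of the squaring map `x ↦ x²`
on the unit group `(ℤ/Nℤ)ˣ`. -/
noncomputable def sqImageCard (N : ℕ) : ℕ :=
  Nat.card (Set.range fun x : (ZMod N)ˣ => x ^ 2)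

open ArithmeticFunction Real

section RangePow

variable {G H : Type*}

lemma natCard_range_pow_congr [Monoid G] [Monoid H] (e : G ≃* H) (n : ℕ) :
    Nat.card (Set.range fun x : G => x ^ n) = Nat.card (Set.range fun y : H => y ^ n) := by
  have h : (Set.range fun y : H => y ^ n) = e '' Set.range fun x : G => x ^ n := by
    rw [← Set.range_comp, ← e.surjective.range_comp]
    congr 1
    ext x
    simp
  rw [h, Nat.card_image_of_injective e.injective]

lemma natCard_range_pow_prod [Monoid G] [Monoid H] (n : ℕ) :
    Nat.card (Set.range fun x : G × H => x ^ n) =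
      Nat.card (Set.range fun x : G => x ^ n) * Nat.card (Set.range fun y : H => y ^ n) := by
  have h : (Set.range fun x : G × H => x ^ n) =
      (Set.range fun x : G => x ^ n) ×ˢ Set.range fun y : H => y ^ n := by
    rw [← Set.range_prodMap]
    rfl
  rw [h, Nat.card_congr (Equiv.Set.prod _ _), Nat.card_prod]

lemma exponent_dvd_mul_natCard_range_pow [CommGroup G] [Finite G] (n : ℕ) :
    Monoid.exponent G ∣ n * Nat.card (Set.range fun x : G => x ^ n) := by
  obtain ⟨g, hg⟩ := Monoid.exists_orderOf_eq_exponent (Monoid.ExponentExists.of_finite (G := G))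
  have hmem : g ^ n ∈ (powMonoidHom n : G →* G).range := ⟨g, rfl⟩
  rw [← hg]
  calc orderOf g ∣ n * orderOf (g ^ n) :=
        orderOf_dvd_of_pow_eq_one (by rw [pow_mul, pow_orderOf_eq_one])
    _ ∣ n * Nat.card (Set.range fun x : G => x ^ n) :=
        mul_dvd_mul_left n (Subgroup.orderOf_dvd_natCard _ hmem)

end RangePow

lemma sqImageCard_one : sqImageCard 1 = 1 := by
  simp [sqImageCard]

lemma sqImageCard_pos (N : ℕ) : 0 < sqImageCard N := by
  rcases eq_or_ne N 0 with rfl | hN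
  · exact Nat.card_pos
  · have : NeZero N := ⟨hN⟩
    exact Nat.card_pos

lemma sqImageCard_mul {m n : ℕ} (h : m.Coprime n) :
    sqImageCard (m * n) = sqImageCard m * sqImageCard n := by
  rw [sqImageCard, natCard_range_pow_congr
    ((Units.mapEquiv (ZMod.chineseRemainder h).toMulEquiv).trans MulEquiv.prodUnits),
    natCard_range_pow_prod, sqImageCard, sqImageCard]

lemma carmichael_le_two_mul_sqImageCard (N : ℕ) : carmichael N ≤ 2 * sqImageCard N := by
  rcases eq_or_ne N 0 with rfl | hN
  · simp
  have : NeZero N := ⟨hN⟩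
  refine Nat.le_of_dvd (by have := sqImageCard_pos N; omega) ?_
  rw [carmichael_eq_exponent hN]
  exact exponent_dvd_mul_natCard_range_pow 2

lemma totient_le_two_mul_carmichael_two_pow (e : ℕ) :
    (2 ^ e).totient ≤ 2 * carmichael (2 ^ e) := by
  rcases le_or_gt e 2 with he | he
  · rw [carmichael_two_pow_of_le_two_eq_totient he]
    omega
  · rw [two_mul_carmichael_two_pow_of_three_le_eq_totient he]

lemma totient_prime_pow_le_two_mul_sqImageCard {p : ℕ} (hp : p.Prime) (hp2 : p ≠ 2) (e : ℕ) :
    (p ^ e).totient ≤ 2 * sqImageCard (p ^ e) := by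
  rw [← carmichael_pow_of_prime_ne_two e hp hp2]
  exact carmichael_le_two_mul_sqImageCard _

lemma totient_two_pow_le_four_mul_sqImageCard (e : ℕ) :
    (2 ^ e).totient ≤ 4 * sqImageCard (2 ^ e) := by
  have := carmichael_le_two_mul_sqImageCard (2 ^ e)
  have := totient_le_two_mul_carmichael_two_pow e
  omega

noncomputable def sqImageConst (δ : ℝ) (p : ℕ) : ℝ :=
  if p = 2 then 8 else max 1 (p * (2 / ((p : ℝ) - 1)) ^ (1 + δ))

lemma one_le_sqImageConst (δ : ℝ) (p : ℕ) : 1 ≤ sqImageConst δ p := by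
  unfold sqImageConst
  split_ifs
  · norm_num
  · exact le_max_left _ _

lemma two_pow_le_sqImageConst_mul {δ : ℝ} (hδ : 0 ≤ δ) {e : ℕ} (he : e ≠ 0) :
    ((2 ^ e : ℕ) : ℝ) ≤ sqImageConst δ 2 * (sqImageCard (2 ^ e) : ℝ) ^ (1 + δ) := by
  set k : ℝ := (sqImageCard (2 ^ e) : ℝ)
  have hφ : (2 : ℝ) ^ (e - 1) ≤ 4 * k := by
    have := totient_two_pow_le_four_mul_sqImageCard e
    rw [Nat.totient_prime_pow Nat.prime_two (Nat.pos_of_ne_zero he)] at this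
    simp only [Nat.add_one_sub_one, mul_one] at this
    have := (Nat.cast_le (α := ℝ)).mpr this
    push_cast at this
    exact this
  have hk : 1 ≤ k := Nat.one_le_cast.mpr (sqImageCard_pos _)
  calc ((2 ^ e : ℕ) : ℝ) = 2 * 2 ^ (e - 1) := by
        rw [Nat.cast_pow, Nat.cast_ofNat, ← pow_succ',
          Nat.sub_add_cancel (Nat.one_le_iff_ne_zero.mpr he)]
    _ ≤ 8 * k := by linarith
    _ ≤ 8 * k ^ (1 + δ) := by gcongr; exact self_le_rpow_of_one_le hk (by linarith)
    _ = sqImageConst δ 2 * k ^ (1 + δ) := by rw [sqImageConst, if_pos rfl]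

lemma prime_pow_le_sqImageConst_mul_of_ne_two {δ : ℝ} (hδ : 0 ≤ δ) {p e : ℕ} (hp : p.Prime)
    (hp2 : p ≠ 2) (he : e ≠ 0) :
    ((p ^ e : ℕ) : ℝ) ≤ sqImageConst δ p * (sqImageCard (p ^ e) : ℝ) ^ (1 + δ) := by
  set k : ℝ := (sqImageCard (p ^ e) : ℝ)
  set x : ℝ := (p : ℝ) ^ (e - 1)
  have hp1 : (0 : ℝ) < p - 1 := by
    have : (1 : ℝ) < p := by exact_mod_cast hp.one_lt
    linarith
  have hφ : x ≤ 2 / (p - 1) * k := by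
    have := totient_prime_pow_le_two_mul_sqImageCard hp hp2 e
    rw [Nat.totient_prime_pow hp (Nat.pos_of_ne_zero he)] at this
    have : x * (p - 1) ≤ 2 * k := by
      have := (Nat.cast_le (α := ℝ)).mpr this
      push_cast [Nat.cast_sub hp.one_le] at this
      exact this
    rw [div_mul_eq_mul_div, le_div_iff₀ hp1]
    linarith
  have hx : 1 ≤ x := one_le_pow₀ (by exact_mod_cast hp.one_le)
  have hxk : x ≤ (2 / (p - 1)) ^ (1 + δ) * k ^ (1 + δ) := by
    rw [← mul_rpow (by positivity) (by positivity)]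
    exact (self_le_rpow_of_one_le hx (by linarith)).trans
      (rpow_le_rpow (by linarith) hφ (by linarith))
  calc ((p ^ e : ℕ) : ℝ) = p * x := by
        rw [Nat.cast_pow, ← pow_succ', Nat.sub_add_cancel (Nat.one_le_iff_ne_zero.mpr he)]
    _ ≤ p * (2 / (p - 1)) ^ (1 + δ) * k ^ (1 + δ) := by
        rw [mul_assoc]; gcongr
    _ ≤ sqImageConst δ p * k ^ (1 + δ) := by
        rw [sqImageConst, if_neg hp2]; gcongr; exact le_max_right _ _

lemma prime_pow_le_sqImageConst_mul {δ : ℝ} (hδ : 0 ≤ δ) {p e : ℕ} (hp : p.Prime)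
    (he : e ≠ 0) :
    ((p ^ e : ℕ) : ℝ) ≤ sqImageConst δ p * (sqImageCard (p ^ e) : ℝ) ^ (1 + δ) := by
  rcases eq_or_ne p 2 with rfl | hp2
  · exact two_pow_le_sqImageConst_mul hδ he
  · exact prime_pow_le_sqImageConst_mul_of_ne_two hδ hp hp2 he

lemma le_prod_primeFactors_mul_of_prime_pow {f g c : ℕ → ℝ}
    (hf : ∀ a b, a.Coprime b → f (a * b) = f a * f b) (hf1 : f 1 = 1) (hf0 : ∀ n, 0 ≤ f n)
    (hg : ∀ a b, a.Coprime b → g (a * b) = g a * g b) (hg1 : g 1 = 1)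
    (hc : ∀ p e, p.Prime → e ≠ 0 → f (p ^ e) ≤ c p * g (p ^ e)) {N : ℕ} (hN : N ≠ 0) :
    f N ≤ (∏ p ∈ N.primeFactors, c p) * g N := by
  rw [Nat.multiplicative_factorization f hf hf1 hN, Nat.multiplicative_factorization g hg hg1 hN,
    Finsupp.prod, Finsupp.prod, Nat.support_factorization, ← Finset.prod_mul_distrib]
  refine Finset.prod_le_prod (fun _ _ => hf0 _) fun p hp => ?_
  exact hc _ _ (Nat.prime_of_mem_primeFactors hp)
    (Finsupp.mem_support_iff.mp (Nat.support_factorization N ▸ hp))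

lemma prod_sqImageConst_le {δ : ℝ} {P : Finset ℕ}
    (hP : ∀ p : ℕ, p ∈ P ↔ p.Prime ∧ 3 < p ∧ 1 < (p : ℝ) * (2 / ((p : ℝ) - 1)) ^ (1 + δ))
    {S : Finset ℕ} (hS : ∀ p ∈ S, p.Prime) :
    ∏ p ∈ S, sqImageConst δ p ≤ 24 * ∏ p ∈ P, (p : ℝ) * (2 / ((p : ℝ) - 1)) ^ (1 + δ) := by
  have h3P : 3 ∉ P := fun h => by simp [hP] at h
  have h2P : 2 ∉ insert 3 P := by simp [hP]
  have hc3 : sqImageConst δ 3 = 3 := by norm_num [sqImageConst]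
  have hcP : ∀ p ∈ P, sqImageConst δ p = p * (2 / ((p : ℝ) - 1)) ^ (1 + δ) := by
    intro p hp
    obtain ⟨-, hp3, hF⟩ := (hP p).mp hp
    rw [sqImageConst, if_neg (by omega), max_eq_right hF.le]
  have hc1 : ∀ p ∈ S ∪ insert 2 (insert 3 P), p ∉ insert 2 (insert 3 P) →
      sqImageConst δ p = 1 := by
    intro p hp hpT
    simp only [Finset.mem_insert, not_or] at hpT
    obtain ⟨hp2, hp3, hpP⟩ := hpT
    have hp : p.Prime := hS p ((Finset.mem_union.mp hp).resolve_right (by simp [hp2, hp3, hpP]))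
    have h3p : 3 < p := by have := hp.two_le; omega
    have hF : ¬ 1 < (p : ℝ) * (2 / ((p : ℝ) - 1)) ^ (1 + δ) :=
      fun hF => hpP ((hP p).mpr ⟨hp, h3p, hF⟩)
    rw [sqImageConst, if_neg hp2, max_eq_left (not_lt.mp hF)]
  calc ∏ p ∈ S, sqImageConst δ p ≤ ∏ p ∈ S ∪ insert 2 (insert 3 P), sqImageConst δ p :=
        Finset.prod_le_prod_of_subset_of_one_le Finset.subset_union_left
          (fun p _ => zero_le_one.trans (one_le_sqImageConst δ p))
          (fun p _ _ => one_le_sqImageConst δ p)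
    _ = ∏ p ∈ insert 2 (insert 3 P), sqImageConst δ p :=
        (Finset.prod_subset Finset.subset_union_right hc1).symm
    _ = 24 * ∏ p ∈ P, (p : ℝ) * (2 / ((p : ℝ) - 1)) ^ (1 + δ) := by
        rw [Finset.prod_insert h2P, Finset.prod_insert h3P, hc3, Finset.prod_congr rfl hcP,
          sqImageConst, if_pos rfl]
        ring

theorem stmt_4 (δ : ℝ) (hδ : 0 < δ) (P : Finset ℕ)
    (hP : ∀ p : ℕ, p ∈ P ↔
      p.Prime ∧ 3 < p ∧ 1 < (p : ℝ) * (2 / ((p : ℝ) - 1)) ^ (1 + δ))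
    (N : ℕ) (hN : 0 < N) :
    (N : ℝ) ≤ (24 * ∏ p ∈ P, (p : ℝ) * (2 / ((p : ℝ) - 1)) ^ (1 + δ)) *
        (sqImageCard N : ℝ) ^ (1 + δ) := by
  have hbound := le_prod_primeFactors_mul_of_prime_pow (f := fun n => (n : ℝ))
    (g := fun n => (sqImageCard n : ℝ) ^ (1 + δ)) (c := sqImageConst δ)
    (fun a b _ => Nat.cast_mul a b) Nat.cast_one (fun n => n.cast_nonneg)
    (fun a b hab => by
      rw [sqImageCard_mul hab, Nat.cast_mul, mul_rpow (Nat.cast_nonneg _) (Nat.cast_nonneg _)])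
    (by rw [sqImageCard_one, Nat.cast_one, one_rpow])
    (fun p e hp he => prime_pow_le_sqImageConst_mul hδ.le hp he) hN.ne'
  exact hbound.trans (mul_le_mul_of_nonneg_right
    (prod_sqImageConst_le hP fun p hp => Nat.prime_of_mem_primeFactors hp) (by positivity))
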